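/- Let m, N_L, N_R be positive integers, let w ∈ ℝ^{m×(N_L+N_R)} be a fixed weight matrix, let μ_1, …, μ_{N_L+N_R} ∈ ℝ^m be centers with μ_k ≠ μ_l for every k ≠ l, let α_1, …, α_{N_L+N_R} ∈ (0,∞)^m be fixed strictly positive base steepness vectors, fix l ∈ {N_L+1, …, N_L+N_R}, and let y ∈ ℝ^m satisfy y_i ≠ μ_{ji} for every i = 1, …, m and every j = 1, …, N_L+N_R. Then the sum of products Σ_{i=1}^m Σ_{j=1}^{N_L} tα_{li} w_{ij} P(y; μ_l, tα_l) Λ(y; μ_j, tα_j) + Σ_{i=1}^m Σ_{k=N_L+1}^{N_L+N_R} tα_{li} w_{ik} P(y; μ_l, tα_l) P(y; μ_k, tα_k), minus the weighted sum Σ_{i=1}^m Σ_{j=1}^{N_L} tα_{li} w_{ij} H(y; (μ_j, tα_j), (μ_l, tα_l)), converges to 0 exponentially as t → ∞: there exist constants C, c > 0 such that the absolute value of this difference is at most C·exp(−c·t) for all t ≥ 1. -/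

import Mathlib

open MeasureTheory ProbabilityTheory Real

noncomputable def logisticFun (y μ α : ℝ) : ℝ := 1 / (1 + Real.exp (-α * (y - μ)))

noncomputable def rbfFun (y μ α : ℝ) : ℝ :=
  Real.exp (-α * (y - μ)) / (1 + Real.exp (-α * (y - μ))) ^ 2

noncomputable def conjLog {m : ℕ} (y μ α : Fin m → ℝ) : ℝ :=
  ∏ i, logisticFun (y i) (μ i) (α i)

noncomputable def conjRBF {m : ℕ} (y μ α : Fin m → ℝ) : ℝ :=
  ∏ i, rbfFun (y i) (μ i) (α i)

open scoped Classical in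
/-- Decision function `H(y; (μl, αl), (μk, αk))`. -/
noncomputable def decisionH {m : ℕ} (y μl αl μk αk : Fin m → ℝ) : ℝ :=
  if ∀ i, μl i < μk i then conjRBF y μk αk else 0

/-!
Every summand carries the factor `P(y; μ_l, tα_l)`: explicitly in the first two sums (the other
factors `Λ` and `P` lie in `[0, 1]`), and through `H(y; θ_j, θ_l) ∈ {P(y; μ_l, tα_l), 0}` in the
third. Since `ρ(y; μ, α) ≤ exp (-|α (y - μ)|)` and `y` avoids every coordinate of `μ_l`, this factor
is at most `exp (-b t)` with `b = ∑ i, |α_{li} (y_i - μ_{li})| > 0`; the prefactor `t` is absorbed by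
halving the rate.
-/

lemma rbfFun_nonneg (y μ α : ℝ) : 0 ≤ rbfFun y μ α := by
  unfold rbfFun; positivity

lemma rbfFun_le_exp_neg_abs (y μ α : ℝ) : rbfFun y μ α ≤ exp (-|α * (y - μ)|) := by
  unfold rbfFun
  rw [neg_mul]
  set u := α * (y - μ)
  have hs : 0 < exp (-u) := exp_pos _
  rcases le_or_gt 0 u with hu | hu
  · rw [abs_of_nonneg hu]
    exact div_le_self hs.le (one_le_pow₀ (by linarith))
  · -- `s / (1 + s) ^ 2 ≤ 1 / s` with `s = exp (-u)`
    rw [abs_of_neg hu, neg_neg, div_le_iff₀ (by positivity)]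
    have hinv : exp u * exp (-u) = 1 := by rw [← exp_add, add_neg_cancel, exp_zero]
    nlinarith [exp_pos u]

lemma rbfFun_le_one (y μ α : ℝ) : rbfFun y μ α ≤ 1 :=
  (rbfFun_le_exp_neg_abs y μ α).trans (exp_le_one_iff.mpr (neg_nonpos.mpr (abs_nonneg _)))

lemma logisticFun_nonneg (y μ α : ℝ) : 0 ≤ logisticFun y μ α := by
  unfold logisticFun; positivity

lemma logisticFun_le_one (y μ α : ℝ) : logisticFun y μ α ≤ 1 := by
  unfold logisticFun
  rw [div_le_one (by positivity)]
  linarith [exp_pos (-α * (y - μ))]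

section Conjunctive

variable {m : ℕ} (y μ α : Fin m → ℝ)

lemma conjRBF_nonneg : 0 ≤ conjRBF y μ α :=
  Finset.prod_nonneg fun _ _ => rbfFun_nonneg _ _ _

lemma conjRBF_le_one : conjRBF y μ α ≤ 1 :=
  Finset.prod_le_one (fun _ _ => rbfFun_nonneg _ _ _) fun _ _ => rbfFun_le_one _ _ _

lemma conjLog_nonneg : 0 ≤ conjLog y μ α :=
  Finset.prod_nonneg fun _ _ => logisticFun_nonneg _ _ _

lemma conjLog_le_one : conjLog y μ α ≤ 1 :=
  Finset.prod_le_one (fun _ _ => logisticFun_nonneg _ _ _) fun _ _ => logisticFun_le_one _ _ _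

lemma conjRBF_le_exp : conjRBF y μ α ≤ exp (-∑ i, |α i * (y i - μ i)|) := by
  rw [← Finset.sum_neg_distrib, exp_sum]
  exact Finset.prod_le_prod (fun _ _ => rbfFun_nonneg _ _ _)
    fun i _ => rbfFun_le_exp_neg_abs (y i) (μ i) (α i)

lemma conjRBF_mul_le_exp {t : ℝ} (ht : 0 ≤ t) :
    conjRBF y μ (fun i => t * α i) ≤ exp (-((∑ i, |α i * (y i - μ i)|) * t)) := by
  refine (conjRBF_le_exp y μ _).trans_eq ?_
  simp only [mul_assoc, abs_mul, abs_of_nonneg ht, Finset.sum_mul, mul_comm t]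

lemma sum_abs_mul_sub_pos [NeZero m] (hα : ∀ i, α i ≠ 0) (hy : ∀ i, y i ≠ μ i) :
    0 < ∑ i, |α i * (y i - μ i)| :=
  Finset.sum_pos (fun i _ => abs_pos.mpr (mul_ne_zero (hα i) (sub_ne_zero.mpr (hy i))))
    Finset.univ_nonempty

lemma abs_decisionH_le (μl αl μk αk : Fin m → ℝ) :
    |decisionH y μl αl μk αk| ≤ conjRBF y μk αk := by
  unfold decisionH
  split_ifs
  exacts [(abs_of_nonneg (conjRBF_nonneg _ _ _)).le, abs_zero.trans_le (conjRBF_nonneg _ _ _)]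

end Conjunctive

lemma abs_mul_le_of_le_one {P x : ℝ} (hP : 0 ≤ P) (hx₀ : 0 ≤ x) (hx₁ : x ≤ 1) : |P * x| ≤ P := by
  rw [abs_of_nonneg (mul_nonneg hP hx₀)]
  exact mul_le_of_le_one_right hP hx₁

lemma abs_sum_sum_mul_le {ι κ : Type*} [Fintype ι] [Fintype κ] {t B : ℝ} (ht : 0 ≤ t)
    (a : ι → ℝ) (w : ι → κ → ℝ) (X : κ → ℝ) (hX : ∀ j, |X j| ≤ B) :
    |∑ i, ∑ j, t * a i * w i j * X j| ≤ t * (∑ i, ∑ j, |a i * w i j|) * B := by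
  simp only [Finset.mul_sum, Finset.sum_mul]
  refine (Finset.abs_sum_le_sum_abs _ _).trans (Finset.sum_le_sum fun i _ => ?_)
  refine (Finset.abs_sum_le_sum_abs _ _).trans (Finset.sum_le_sum fun j _ => ?_)
  rw [mul_assoc t, abs_mul, abs_mul, abs_of_nonneg ht]
  exact mul_le_mul_of_nonneg_left (hX j) (by positivity)

lemma exists_mul_exp_neg_le {K b : ℝ} (hK : 0 ≤ K) (hb : 0 < b) :
    ∃ C c : ℝ, 0 < C ∧ 0 < c ∧ ∀ t, K * (t * exp (-(b * t))) ≤ C * exp (-c * t) := by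
  refine ⟨(K + 1) / b, b / 2, by positivity, half_pos hb, fun t => ?_⟩
  have hlin : b * t ≤ exp (b / 2 * t) := by
    simpa [← mul_assoc, mul_div_cancel₀] using two_mul_le_exp (x := b / 2 * t)
  have hdecay : t * exp (-(b * t)) ≤ exp (-(b / 2) * t) / b := by
    rw [le_div_iff₀ hb]
    calc t * exp (-(b * t)) * b = b * t * exp (-(b * t)) := by ring
      _ ≤ exp (b / 2 * t) * exp (-(b * t)) := by gcongr
      _ = exp (-(b / 2) * t) := by rw [← exp_add]; ring_nf
  calc K * (t * exp (-(b * t))) ≤ K * (exp (-(b / 2) * t) / b) := by gcongr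
    _ ≤ (K + 1) * (exp (-(b / 2) * t) / b) := by gcongr; linarith
    _ = (K + 1) / b * exp (-(b / 2) * t) := by ring

theorem bilinear_rbf_sum_exp_approx_general
    (m NL NR : ℕ) (hm : 0 < m)
    (wL : Fin m → Fin NL → ℝ) (wR : Fin m → Fin NR → ℝ)
    (μL : Fin NL → Fin m → ℝ) (μR : Fin NR → Fin m → ℝ)
    (αL : Fin NL → Fin m → ℝ) (αR : Fin NR → Fin m → ℝ)
    (hαR : ∀ k i, 0 < αR k i)
    (l : Fin NR)
    (y : Fin m → ℝ)
    (hyR : ∀ i k, y i ≠ μR k i) :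
    ∃ C c : ℝ, 0 < C ∧ 0 < c ∧ ∀ t : ℝ, 1 ≤ t →
      |((∑ i, ∑ j, t * αR l i * wL i j
            * (conjRBF y (μR l) (fun i' => t * αR l i')
                * conjLog y (μL j) (fun i' => t * αL j i')))
          + ∑ i, ∑ k, t * αR l i * wR i k
            * (conjRBF y (μR l) (fun i' => t * αR l i')
                * conjRBF y (μR k) (fun i' => t * αR k i')))
        - ∑ i, ∑ j, t * αR l i * wL i j
            * decisionH y (μL j) (fun i' => t * αL j i') (μR l) (fun i' => t * αR l i')|
      ≤ C * Real.exp (-c * t) := by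
  have : NeZero m := ⟨hm.ne'⟩
  set b := ∑ i, |αR l i * (y i - μR l i)|
  have hb : 0 < b := sum_abs_mul_sub_pos _ _ _ (fun i => (hαR l i).ne') fun i => hyR i l
  set SL := ∑ i, ∑ j, |αR l i * wL i j|
  set SR := ∑ i, ∑ k, |αR l i * wR i k|
  obtain ⟨C, c, hC, hc, hdecay⟩ :=
    exists_mul_exp_neg_le (K := 2 * SL + SR) (by positivity) hb
  refine ⟨C, c, hC, hc, fun t ht => le_trans ?_ (hdecay t)⟩
  have ht0 : 0 ≤ t := zero_le_one.trans ht
  set P := conjRBF y (μR l) (fun i' => t * αR l i')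
  have hP0 : 0 ≤ P := conjRBF_nonneg _ _ _
  have hP : P ≤ exp (-(b * t)) := conjRBF_mul_le_exp _ _ _ ht0
  refine le_trans (abs_sub _ _) (le_trans (add_le_add_left (abs_add_le _ _) _) ?_)
  calc _ ≤ t * SL * P + t * SR * P + t * SL * P := add_le_add (add_le_add ?_ ?_) ?_
    _ = (2 * SL + SR) * (t * P) := by ring
    _ ≤ (2 * SL + SR) * (t * exp (-(b * t))) := by gcongr
  · exact abs_sum_sum_mul_le ht0 _ _ _ fun j =>
      abs_mul_le_of_le_one hP0 (conjLog_nonneg _ _ _) (conjLog_le_one _ _ _)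
  · exact abs_sum_sum_mul_le ht0 _ _ _ fun k =>
      abs_mul_le_of_le_one hP0 (conjRBF_nonneg _ _ _) (conjRBF_le_one _ _ _)
  · exact abs_sum_sum_mul_le ht0 _ _ _ fun j => abs_decisionH_le _ _ _ _ _

theorem bilinear_rbf_sum_exp_approx
    (m NL NR : ℕ) (hm : 0 < m) (hNL : 0 < NL) (hNR : 0 < NR)
    (wL : Fin m → Fin NL → ℝ) (wR : Fin m → Fin NR → ℝ)
    (μL : Fin NL → Fin m → ℝ) (μR : Fin NR → Fin m → ℝ)
    (αL : Fin NL → Fin m → ℝ) (αR : Fin NR → Fin m → ℝ)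
    (hαL : ∀ j i, 0 < αL j i) (hαR : ∀ k i, 0 < αR k i)
    (l : Fin NR)
    (hdistL : ∀ j : Fin NL, μL j ≠ μR l)
    (hdistR : ∀ k : Fin NR, k ≠ l → μR k ≠ μR l)
    (y : Fin m → ℝ)
    (hyL : ∀ i j, y i ≠ μL j i) (hyR : ∀ i k, y i ≠ μR k i) :
    ∃ C c : ℝ, 0 < C ∧ 0 < c ∧ ∀ t : ℝ, 1 ≤ t →
      |((∑ i, ∑ j, t * αR l i * wL i j
            * (conjRBF y (μR l) (fun i' => t * αR l i')
                * conjLog y (μL j) (fun i' => t * αL j i')))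
          + ∑ i, ∑ k, t * αR l i * wR i k
            * (conjRBF y (μR l) (fun i' => t * αR l i')
                * conjRBF y (μR k) (fun i' => t * αR k i')))
        - ∑ i, ∑ j, t * αR l i * wL i j
            * decisionH y (μL j) (fun i' => t * αL j i') (μR l) (fun i' => t * αR l i')|
      ≤ C * Real.exp (-c * t) :=
  bilinear_rbf_sum_exp_approx_general m NL NR hm wL wR μL μR αL αR hαR l y hyR
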